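/- arXiv:2003.07742 — 5 statements merged into one kernel-verified Lean document; each statement's English description precedes it below -/
import Mathlib

section
/- Let X be a separable Banach space, Y a closed subspace of X, and Q : X → X/Y the canonical quotient map. If the quotient X/Y is infinite-dimensional, then there exists a dense linear subspace X₀ of X such that the restriction of Q to X₀ is injective. -/
/-!
For a finite-dimensional subspace `F`, the subspace `F ⊔ Y` is proper because `X ⧸ Y` is
infinite-dimensional, so it has empty interior and its complement is dense. Enumerating a countable
basis `(U n)` of the topology, we can therefore choose `v n ∈ U n` outside
`span {v m | m < n} ⊔ Y`. The span of the `v n` meets every `U n`, hence is dense, and it meets `Y`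
only in `0`, so the quotient map is injective on it.
-/

open Set TopologicalSpace

theorem exists_seq_of_forall_finite_exists {α : Type*} (P : ℕ → Set α → α → Prop)
    (h : ∀ n (s : Set α), s.Finite → ∃ x, P n s x) :
    ∃ v : ℕ → α, ∀ n, P n (v '' Iio n) (v n) := by
  have : Nonempty α := let ⟨x, _⟩ := h 0 ∅ finite_empty; ⟨x⟩
  choose! next hnext using h
  let v : ℕ → α := fun n =>
    Nat.strongRec (fun n prev => next n (⋃ (m) (hm : m < n), {prev m hm})) n
  have hv (n : ℕ) : v n = next n (v '' Iio n) := by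
    simp only [v]
    rw [Nat.strongRec_eq]
    congr 1
    ext
    simp [eq_comm]
  exact ⟨v, fun n => hv n ▸ hnext n _ ((finite_Iio n).image v)⟩

namespace Submodule

theorem sup_ne_top_of_fg {R M : Type*} [Ring R] [AddCommGroup M] [Module R M]
    {Y F : Submodule R M} (hY : ¬ Module.Finite R (M ⧸ Y)) (hF : F.FG) : F ⊔ Y ≠ ⊤ := by
  rw [sup_comm, Ne, ← map_mkQ_eq_top]
  intro htop
  exact hY (Module.finite_def.2 (htop ▸ hF.map Y.mkQ))

theorem dense_compl_of_ne_top {R M : Type*} [Ring R] [TopologicalSpace R]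
    [TopologicalSpace M] [AddCommGroup M] [ContinuousAdd M] [Module R M] [ContinuousSMul R M]
    [Filter.NeBot (nhdsWithin 0 {x : R | IsUnit x})] {s : Submodule R M} (hs : s ≠ ⊤) :
    Dense (s : Set M)ᶜ := by
  rw [← interior_eq_empty_iff_dense_compl, ← not_nonempty_iff_eq_empty]
  exact fun h => hs (s.eq_top_of_nonempty_interior' h)

section DivisionRing

variable {R M : Type*} [DivisionRing R] [AddCommGroup M] [Module R M]
  {Y : Submodule R M} {v : ℕ → M}

theorem disjoint_span_image_Iio (hv : ∀ n, v n ∉ span R (v '' Iio n) ⊔ Y) (n : ℕ) :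
    Disjoint (span R (v '' Iio n)) Y := by
  induction n with
  | zero => simp
  | succ n ih =>
    have hv0 : v n ≠ 0 := fun h => hv n (h ▸ zero_mem _)
    rw [Iio_add_one_eq_Iic, ← Iio_insert, image_insert_eq, span_insert]
    exact ih.disjoint_sup_left_of_disjoint_sup_right
      ((disjoint_span_singleton' hv0).2 (hv n)).symm

theorem disjoint_span_range (hv : ∀ n, v n ∉ span R (v '' Iio n) ⊔ Y) :
    Disjoint (span R (range v)) Y := by
  have hdir : Directed (· ≤ ·) fun n => span R (v '' Iio n) :=
    Monotone.directed_le fun m n hmn => span_mono (image_mono (Iio_subset_Iio hmn))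
  rw [← image_univ, ← iUnion_Iio, image_iUnion, span_iUnion, hdir.disjoint_iSup_left]
  exact disjoint_span_image_Iio hv

end DivisionRing

theorem exists_seq_mem_disjoint_span {𝕜 M : Type*} [NontriviallyNormedField 𝕜]
    [AddCommGroup M] [Module 𝕜 M] [TopologicalSpace M] [ContinuousAdd M] [ContinuousSMul 𝕜 M]
    {Y : Submodule 𝕜 M} (hY : ¬ Module.Finite 𝕜 (M ⧸ Y)) {U : ℕ → Set M}
    (hUo : ∀ n, IsOpen (U n)) (hUne : ∀ n, (U n).Nonempty) :
    ∃ v : ℕ → M, (∀ n, v n ∈ U n) ∧ Disjoint (span 𝕜 (range v)) Y := by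
  obtain ⟨v, hv⟩ := exists_seq_of_forall_finite_exists
    (fun n s x => x ∈ U n ∧ x ∉ span 𝕜 s ⊔ Y)
    fun n s hs => (dense_compl_of_ne_top (sup_ne_top_of_fg hY (fg_span hs))).inter_open_nonempty
      (U n) (hUo n) (hUne n)
  exact ⟨v, fun n => (hv n).1, disjoint_span_range fun n => (hv n).2⟩

end Submodule

theorem stmt0_general (X : Type*) [NormedAddCommGroup X] [NormedSpace ℝ X]
    [TopologicalSpace.SeparableSpace X]
    (Y : Submodule ℝ X)
    (hinf : ¬ FiniteDimensional ℝ (X ⧸ Y)) :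
    ∃ X₀ : Submodule ℝ X, Dense (X₀ : Set X) ∧
      Set.InjOn (Submodule.Quotient.mk : X → X ⧸ Y) (X₀ : Set X) := by
  obtain ⟨B, hBc, hB0, hB⟩ := exists_countable_basis X
  obtain ⟨b, hb, -⟩ := hB.exists_subset_of_mem_open (mem_univ (0 : X)) isOpen_univ
  obtain ⟨U, rfl⟩ := hBc.exists_eq_range ⟨b, hb⟩
  obtain ⟨v, hvU, hdisj⟩ := Submodule.exists_seq_mem_disjoint_span hinf
    (fun n => hB.isOpen (mem_range_self n))
    (fun n => nonempty_iff_ne_empty.2 fun h => hB0 (h ▸ mem_range_self n))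
  refine ⟨Submodule.span ℝ (range v), (hB.dense_iff.2 ?_).mono Submodule.subset_span,
    Y.mkQ.injOn_of_disjoint_ker subset_rfl (by rwa [Submodule.ker_mkQ])⟩
  rintro _ ⟨n, rfl⟩ -
  exact ⟨v n, hvU n, mem_range_self n⟩

theorem stmt0 (X : Type*) [NormedAddCommGroup X] [NormedSpace ℝ X] [CompleteSpace X]
    [TopologicalSpace.SeparableSpace X]
    (Y : Submodule ℝ X) (hY : IsClosed (Y : Set X))
    (hinf : ¬ FiniteDimensional ℝ (X ⧸ Y)) :
    ∃ X₀ : Submodule ℝ X, Dense (X₀ : Set X) ∧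
      Set.InjOn (Submodule.Quotient.mk : X → X ⧸ Y) (X₀ : Set X) :=
  stmt0_general X Y hinf
end

section
/- Let X be a separable normed space and let f : X → Z be a continuous linear surjection onto a normed space Z with infinite-dimensional range. Then there exists a dense subspace X₀ ⊆ X on which f is injective. (It suffices to assume Z = range f is infinite-dimensional.) -/
/-!
Enumerate a countable basis `U 0, U 1, …` of nonempty open sets of `X` and pick `y n ∈ U n`
recursively so that `f (y n)` avoids the span of `f (y 0), …, f (y (n-1))`. This is possible because
that span is a proper subspace of the infinite-dimensional space `Z`, so its preimage under the
surjection `f` is a proper subspace of `X` and has empty interior. The `y n` then span a dense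
subspace, and since the `f (y n)` are linearly independent, `f` is injective on it.
-/

open Set Submodule TopologicalSpace

theorem linearIndependent_of_notMem_span_image_Iio {K V ι : Type*} [DivisionRing K]
    [AddCommGroup V] [Module K V] [LinearOrder ι] {v : ι → V}
    (hv : ∀ i, v i ∉ span K (v '' Iio i)) : LinearIndependent K v := by
  rw [linearIndependent_iff_finset_linearIndependent]
  intro s
  change LinearIndepOn K v s
  induction s using Finset.induction_on_max with
  | empty => simp
  | insert a s hlt ih =>
    rw [Finset.coe_insert, linearIndepOn_insert fun ha => lt_irrefl a (hlt a ha)]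
    exact ⟨ih, fun h => hv a (span_mono (image_mono hlt) h)⟩

theorem exists_linearIndependent_forall_mem {K V : Type*} [DivisionRing K] [AddCommGroup V]
    [Module K V] {B : ℕ → Set V} (hB : ∀ n (s : Finset V), ∃ v ∈ B n, v ∉ span K (s : Set V)) :
    ∃ v : ℕ → V, (∀ n, v n ∈ B n) ∧ LinearIndependent K v := by
  classical
  choose next hnext_mem hnext_notMem using hB
  obtain ⟨T, hT_zero, hT_succ⟩ : ∃ T : ℕ → Finset V,
      T 0 = ∅ ∧ ∀ n, T (n + 1) = insert (next n (T n)) (T n) :=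
    ⟨fun n => Nat.rec ∅ (fun n t => insert (next n t) t) n, rfl, fun _ => rfl⟩
  let v : ℕ → V := fun n => next n (T n)
  have hT : ∀ n, (T n : Set V) = v '' Iio n := by
    intro n
    induction n with
    | zero => simp [hT_zero]
    | succ n ih =>
      rw [hT_succ, Finset.coe_insert, ih, Iio_add_one_eq_Iic, ← Iio_insert, image_insert_eq]
  refine ⟨v, fun n => hnext_mem n (T n), linearIndependent_of_notMem_span_image_Iio fun n => ?_⟩
  rw [← hT n]
  exact hnext_notMem n (T n)

theorem Submodule.exists_mem_notMem_of_isOpen {R M : Type*} [Ring R] [TopologicalSpace R]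
    [TopologicalSpace M] [AddCommGroup M] [ContinuousAdd M] [Module R M] [ContinuousSMul R M]
    [Filter.NeBot (nhdsWithin 0 {x : R | IsUnit x})] {p : Submodule R M} (hp : p ≠ ⊤)
    {U : Set M} (hU : IsOpen U) (hne : U.Nonempty) : ∃ x ∈ U, x ∉ p := by
  by_contra! hUp
  exact hp (p.eq_top_of_nonempty_interior' (hne.mono (interior_maximal hUp hU)))

theorem exists_seq_isOpen_nonempty_dense_range_of_mem (X : Type*) [TopologicalSpace X]
    [SecondCountableTopology X] [Nonempty X] :
    ∃ U : ℕ → Set X, (∀ n, IsOpen (U n) ∧ (U n).Nonempty) ∧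
      ∀ y : ℕ → X, (∀ n, y n ∈ U n) → Dense (range y) := by
  obtain ⟨b, hbc, hb_empty, hb⟩ := exists_countable_basis X
  have hb_nonempty : b.Nonempty := by
    obtain ⟨t, ht, -⟩ := mem_sUnion.1 (hb.sUnion_eq ▸ mem_univ (Classical.arbitrary X))
    exact ⟨t, ht⟩
  obtain ⟨U, rfl⟩ := hbc.exists_eq_range hb_nonempty
  refine ⟨U, fun n => ⟨hb.isOpen (mem_range_self n), ?_⟩, fun y hy => hb.dense_iff.2 ?_⟩
  · exact nonempty_iff_ne_empty.2 fun h => hb_empty (h ▸ mem_range_self n)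
  · rintro _ ⟨n, rfl⟩ -
    exact ⟨y n, hy n, mem_range_self n⟩

theorem stmt1 (X Z : Type*) [NormedAddCommGroup X] [NormedSpace ℝ X]
    [TopologicalSpace.SeparableSpace X]
    [NormedAddCommGroup Z] [NormedSpace ℝ Z]
    (f : X →L[ℝ] Z) (hf : Function.Surjective f)
    (hinf : ¬ FiniteDimensional ℝ Z) :
    ∃ X₀ : Submodule ℝ X, Dense (X₀ : Set X) ∧ Set.InjOn f (X₀ : Set X) := by
  obtain ⟨U, hU, hdense⟩ := exists_seq_isOpen_nonempty_dense_range_of_mem X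
  have hB : ∀ n (s : Finset Z), ∃ z ∈ f '' U n, z ∉ span ℝ (s : Set Z) := by
    intro n s
    have hs : span ℝ (s : Set Z) ≠ ⊤ := fun h => hinf (Module.finite_def.2 ⟨s, h⟩)
    have hpre : (span ℝ (s : Set Z)).comap (f : X →ₗ[ℝ] Z) ≠ ⊤ := fun h =>
      hs (comap_injective_of_surjective hf (h.trans (comap_top _).symm))
    obtain ⟨x, hxU, hx⟩ := exists_mem_notMem_of_isOpen hpre (hU n).1 (hU n).2
    exact ⟨f x, mem_image_of_mem f hxU, hx⟩
  obtain ⟨z, hzU, hz⟩ := exists_linearIndependent_forall_mem hB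
  choose y hyU hyz using hzU
  have hfy : LinearIndependent ℝ ((f : X →ₗ[ℝ] Z) ∘ y) := by
    rwa [show (f : X →ₗ[ℝ] Z) ∘ y = z from funext hyz]
  exact ⟨span ℝ (range y), (hdense y hyU).mono subset_span,
    LinearMap.injOn_of_disjoint_ker le_rfl (range_ker_disjoint hfy)⟩
end

section
/- Let X be a normed space with a biorthogonal system (xₙ, xₙ*): xₙ ∈ X, xₙ* ∈ X*, xₖ*(xₙ) = δ_{k,n}, which is semi-normalized (0 < inf ‖xₙ‖ and sup ‖xₙ‖ < ∞) and 1-Besselian, meaning the coefficient transform F(x) = (xₙ*(x))ₙ defines a bounded linear operator from X into ℓ¹. Then there is a bounded linear operator S : ℓ¹ → X̄ (the completion of X) with S(eₙ) = xₙ for all n, and the extension F̂ of F to X̄ satisfies F̂ ∘ S = Id on ℓ¹; hence S is a linear isomorphism onto its (closed, complemented) range. -/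
/-!
Since `(xₙ)` is bounded by some `M`, the series `∑ aₙ xₙ` converges absolutely in the complete space
`X̄` for every `a ∈ ℓ¹`, which gives the synthesis operator `S` with `‖S‖ ≤ M`. Biorthogonality
says `F̂ xₙ = eₙ`, so the continuous map `F̂ ∘ S` fixes every `eₙ` and hence, as the `eₙ` span a
dense subspace of `ℓ¹` (every `a` is `∑ aₙ eₙ`), it is the identity. A continuous left inverse
forces the range of `S` to be closed.
-/

open UniformSpace
open scoped lp

namespace lp

variable {ι 𝕜 E F : Type*} [NontriviallyNormedField 𝕜]
  [NormedAddCommGroup E] [NormedSpace 𝕜 E] [NormedAddCommGroup F] [NormedSpace 𝕜 F]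

theorem norm_eq_tsum_norm_of_one (f : ℓ¹(ι, E)) : ‖f‖ = ∑' i, ‖f i‖ := by
  simp [norm_eq_tsum_rpow (p := 1) (by simp)]

theorem summable_norm_of_one (f : ℓ¹(ι, E)) : Summable fun i ↦ ‖f i‖ := by
  simpa using f.2.summable

noncomputable def coefficientCLM (a : ι → E →L[𝕜] 𝕜) (C : ℝ)
    (hsum : ∀ v, Summable fun i ↦ ‖a i v‖) (hle : ∀ v, ∑' i, ‖a i v‖ ≤ C * ‖v‖) :
    E →L[𝕜] ℓ¹(ι, 𝕜) :=
  LinearMap.mkContinuous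
    { toFun v := ⟨fun i ↦ a i v, memℓp_gen (by simpa using hsum v)⟩
      map_add' v w := by ext; simp; rfl
      map_smul' c v := by ext; simp }
    C fun v ↦ by simpa [norm_eq_tsum_norm_of_one] using hle v

@[simp]
theorem coefficientCLM_apply (a : ι → E →L[𝕜] 𝕜) (C : ℝ)
    (hsum : ∀ v, Summable fun i ↦ ‖a i v‖) (hle : ∀ v, ∑' i, ‖a i v‖ ≤ C * ‖v‖) (v : E) (i : ι) :
    coefficientCLM a C hsum hle v i = a i v := rfl

theorem summable_norm_smul_of_norm_le {y : ι → F} {M : ℝ} (hy : ∀ i, ‖y i‖ ≤ M) (c : ℓ¹(ι, 𝕜)) :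
    Summable fun i ↦ ‖c i • y i‖ :=
  .of_nonneg_of_le (fun _ ↦ norm_nonneg _)
    (fun i ↦ (norm_smul_le _ _).trans (mul_le_mul_of_nonneg_left (hy i) (norm_nonneg _)))
    ((summable_norm_of_one c).mul_right M)

theorem coefficientCLM_apply_of_biorthogonal [DecidableEq ι] (a : ι → E →L[𝕜] 𝕜) (C : ℝ)
    (hsum : ∀ v, Summable fun i ↦ ‖a i v‖) (hle : ∀ v, ∑' i, ‖a i v‖ ≤ C * ‖v‖) {y : ι → E}
    (hay : ∀ i j, a i (y j) = if i = j then 1 else 0) (j : ι) :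
    coefficientCLM a C hsum hle (y j) = lp.single 1 j 1 := by
  ext i
  simp [hay, Pi.single_apply]

variable [CompleteSpace F]

variable (𝕜) in
noncomputable def synthesisCLM (y : ι → F) (M : ℝ) (hy : ∀ i, ‖y i‖ ≤ M) : ℓ¹(ι, 𝕜) →L[𝕜] F :=
  LinearMap.mkContinuous
    { toFun c := ∑' i, c i • y i
      map_add' c d := by
        rw [← (summable_norm_smul_of_norm_le hy c).of_norm.tsum_add
          (summable_norm_smul_of_norm_le hy d).of_norm]
        simp [add_smul]
      map_smul' r c := by
        rw [RingHom.id_apply, ← (summable_norm_smul_of_norm_le hy c).of_norm.tsum_const_smul r]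
        simp [smul_smul] }
    M fun c ↦ calc
      ‖∑' i, c i • y i‖ ≤ ∑' i, ‖c i • y i‖ :=
        norm_tsum_le_tsum_norm (summable_norm_smul_of_norm_le hy c)
      _ ≤ ∑' i, ‖c i‖ * M :=
        (summable_norm_smul_of_norm_le hy c).tsum_le_tsum
          (fun i ↦ (norm_smul_le _ _).trans (mul_le_mul_of_nonneg_left (hy i) (norm_nonneg _)))
          ((summable_norm_of_one c).mul_right M)
      _ = M * ‖c‖ := by rw [tsum_mul_right, mul_comm, norm_eq_tsum_norm_of_one]

theorem synthesisCLM_apply {y : ι → F} {M : ℝ} (hy : ∀ i, ‖y i‖ ≤ M) (c : ℓ¹(ι, 𝕜)) :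
    synthesisCLM 𝕜 y M hy c = ∑' i, c i • y i := rfl

variable [DecidableEq ι]

@[simp]
theorem synthesisCLM_single {y : ι → F} {M : ℝ} (hy : ∀ i, ‖y i‖ ≤ M) (i : ι) :
    synthesisCLM 𝕜 y M hy (lp.single 1 i (1 : 𝕜)) = y i := by
  rw [synthesisCLM_apply, tsum_eq_single i fun j hj ↦ by simp [hj]]
  simp

theorem comp_synthesisCLM_eq_id {y : ι → F} {M : ℝ} (hy : ∀ i, ‖y i‖ ≤ M)
    (T : F →L[𝕜] ℓ¹(ι, 𝕜)) (hT : ∀ i, T (y i) = lp.single 1 i 1) :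
    T.comp (synthesisCLM 𝕜 y M hy) = .id 𝕜 _ := by
  ext1 c
  rw [ContinuousLinearMap.comp_apply, synthesisCLM_apply,
    T.map_tsum (summable_norm_smul_of_norm_le hy c).of_norm]
  simp only [map_smul, hT, ← lp.single_smul, smul_eq_mul, mul_one]
  exact (lp.hasSum_single ENNReal.one_ne_top c).tsum_eq

end lp

theorem ContinuousLinearMap.extend_toComplL_coe {𝕜 E F : Type*} [NontriviallyNormedField 𝕜]
    [NormedAddCommGroup E] [NormedSpace 𝕜 E] [NormedAddCommGroup F] [NormedSpace 𝕜 F]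
    [CompleteSpace F] (f : E →L[𝕜] F) (v : E) :
    f.extend Completion.toComplL (v : Completion E) = f v :=
  f.extend_eq (e := Completion.toComplL) Completion.denseRange_coe
    (Completion.isUniformInducing_coe E) v

theorem stmt13_general (X : Type*) [NormedAddCommGroup X] [NormedSpace ℝ X]
    (x : ℕ → X) (xs : ℕ → (X →L[ℝ] ℝ))
    (hbi : ∀ k n, xs k (x n) = if k = n then (1 : ℝ) else 0)
    (hsn₂ : BddAbove (Set.range fun n => ‖x n‖))
    (C : ℝ)
    (hsum : ∀ v : X, Summable (fun n => |xs n v|))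
    (hbes : ∀ v : X, (∑' n, |xs n v|) ≤ C * ‖v‖) :
    ∃ (S : lp (fun _ : ℕ => ℝ) 1 →L[ℝ] Completion X)
      (Fh : Completion X →L[ℝ] lp (fun _ : ℕ => ℝ) 1),
      (∀ n, S (lp.single 1 n 1) = (x n : Completion X)) ∧
      (∀ (v : X) (n : ℕ), (Fh (v : Completion X) : ∀ _ : ℕ, ℝ) n = xs n v) ∧
      Fh.comp S = ContinuousLinearMap.id ℝ (lp (fun _ : ℕ => ℝ) 1) ∧
      IsClosed (Set.range S) := by
  obtain ⟨M, hM⟩ := hsn₂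
  set F := lp.coefficientCLM xs C (by simpa using hsum) (by simpa using hbes)
  set Fh := F.extend Completion.toComplL
  set S := lp.synthesisCLM ℝ (fun n ↦ (x n : Completion X)) M fun n ↦ by simpa using hM ⟨n, rfl⟩
  have hFh_coe (v : X) : Fh v = F v := F.extend_toComplL_coe v
  have hFS : Fh.comp S = .id ℝ _ :=
    lp.comp_synthesisCLM_eq_id _ Fh fun n ↦ by
      rw [hFh_coe]; exact lp.coefficientCLM_apply_of_biorthogonal _ _ _ _ hbi n
  refine ⟨S, Fh, lp.synthesisCLM_single _, fun v n ↦ by simp [hFh_coe, F], hFS, ?_⟩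
  exact ContinuousLinearMap.HasLeftInverse.isClosed_range ⟨Fh, fun c ↦ congr($hFS c)⟩

theorem stmt13 (X : Type*) [NormedAddCommGroup X] [NormedSpace ℝ X]
    (x : ℕ → X) (xs : ℕ → (X →L[ℝ] ℝ))
    (hbi : ∀ k n, xs k (x n) = if k = n then (1 : ℝ) else 0)
    (hsn₁ : 0 < ⨅ n, ‖x n‖) (hsn₂ : BddAbove (Set.range fun n => ‖x n‖))
    (C : ℝ)
    (hsum : ∀ v : X, Summable (fun n => |xs n v|))
    (hbes : ∀ v : X, (∑' n, |xs n v|) ≤ C * ‖v‖) :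
    ∃ (S : lp (fun _ : ℕ => ℝ) 1 →L[ℝ] Completion X)
      (Fh : Completion X →L[ℝ] lp (fun _ : ℕ => ℝ) 1),
      (∀ n, S (lp.single 1 n 1) = (x n : Completion X)) ∧
      (∀ (v : X) (n : ℕ), (Fh (v : Completion X) : ∀ _ : ℕ, ℝ) n = xs n v) ∧
      Fh.comp S = ContinuousLinearMap.id ℝ (lp (fun _ : ℕ => ℝ) 1) ∧
      IsClosed (Set.range S) :=
  stmt13_general X x xs hbi hsn₂ C hsum hbes
end

section
/- Let X be a Banach space and Y a closed subspace spanned by a sequence (xₙ) forming part of a semi-normalized biorthogonal system (xₙ, xₙ*) whose coefficient transform F : X → ℓ¹, F(x) = (xₙ*(x))ₙ, is bounded. Then X is isomorphic to ℓ¹ ⊕ (X/Y) via the map x ↦ (F(x), x + Y). -/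
/-!
The synthesis operator `S a = ∑ aₙ • xₙ` is bounded from `ℓ¹` into `Y` because `(xₙ)` is bounded,
and biorthogonality, in the form `F xₙ = eₙ`, makes it inverse to `F` on both sides: `F ∘ S = id`
on `ℓ¹`, and `S ∘ F = id` on the `xₙ`, hence on their closed span `Y` by continuity. So `S ∘ F` is a
continuous projection onto `Y ≅ ℓ¹`, and `v ↦ (F v, v + Y)` has the continuous inverse
`(a, v + Y) ↦ S a + (v - S (F v))`.
-/

theorem lp.hasSum_norm_one {ι 𝕜 : Type*} [NormedField 𝕜] (a : lp (fun _ : ι => 𝕜) 1) :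
    HasSum (fun i => ‖a i‖) ‖a‖ := by
  simpa using lp.hasSum_norm (p := 1) (by norm_num) a

section Splitting

variable {R M E : Type*} [Ring R] [TopologicalSpace M] [AddCommGroup M] [IsTopologicalAddGroup M]
  [Module R M] [TopologicalSpace E] [AddCommGroup E] [Module R E]

def Submodule.equivProdQuotientOfSection (Y : Submodule R M) (P : M →L[R] E) (S : E →L[R] M)
    (hPS : ∀ e, P (S e) = e) (hS : ∀ e, S e ∈ Y) (hSP : ∀ y ∈ Y, S (P y) = y) :
    M ≃L[R] E × (M ⧸ Y) :=
  have hker : Y ≤ (ContinuousLinearMap.id R M - S.comp P).ker := fun y hy => by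
    simp [hSP y hy]
  ContinuousLinearEquiv.equivOfInverse (P.prod Y.mkQL)
    (S.coprod (Y.liftQL (ContinuousLinearMap.id R M - S.comp P) hker))
    (fun v => by simp)
    (by
      rintro ⟨e, q⟩
      induction q using Submodule.Quotient.induction_on with | _ v => ?_
      simp [hPS, (Submodule.Quotient.mk_eq_zero Y).2 (hS _)])

end Splitting

section Synthesis

variable {ι 𝕜 X : Type*} [NormedField 𝕜] [NormedAddCommGroup X] [NormedSpace 𝕜 X]
  {x : ι → X} (hx : BddAbove (Set.range fun i => ‖x i‖))

include hx in
theorem norm_smul_le_mul_iSup_norm (c : 𝕜) (i : ι) : ‖c • x i‖ ≤ ‖c‖ * ⨆ j, ‖x j‖ := by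
  rw [norm_smul]
  exact mul_le_mul_of_nonneg_left (le_ciSup hx i) (norm_nonneg _)

variable [CompleteSpace X]

include hx in
theorem summable_lp_one_smul (a : lp (fun _ : ι => 𝕜) 1) : Summable fun i => a i • x i :=
  .of_norm_bounded ((lp.hasSum_norm_one a).summable.mul_right _)
    fun i => norm_smul_le_mul_iSup_norm hx (a i) i

noncomputable def lpOneSynthesis : lp (fun _ : ι => 𝕜) 1 →L[𝕜] X :=
  LinearMap.mkContinuous
    { toFun := fun a => ∑' i, a i • x i
      map_add' := fun a b => by
        simp only [lp.coeFn_add, Pi.add_apply, add_smul]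
        exact (summable_lp_one_smul hx a).tsum_add (summable_lp_one_smul hx b)
      map_smul' := fun c a => by
        simp only [lp.coeFn_smul, Pi.smul_apply, smul_eq_mul, mul_smul, RingHom.id_apply]
        exact (summable_lp_one_smul hx a).tsum_const_smul c }
    (⨆ j, ‖x j‖) fun a => by
      rw [mul_comm]
      exact (summable_lp_one_smul hx a).hasSum.norm_le_of_bounded
        ((lp.hasSum_norm_one a).mul_right _) fun i => norm_smul_le_mul_iSup_norm hx (a i) i

theorem hasSum_lpOneSynthesis (a : lp (fun _ : ι => 𝕜) 1) :
    HasSum (fun i => a i • x i) (lpOneSynthesis hx a) :=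
  (summable_lp_one_smul hx a).hasSum

theorem lpOneSynthesis_single [DecidableEq ι] (i : ι) (c : 𝕜) :
    lpOneSynthesis hx (lp.single 1 i c) = c • x i := by
  refine (hasSum_lpOneSynthesis hx _).unique ?_
  convert hasSum_ite_eq i (c • x i) using 2 with j
  rw [lp.single_apply, Pi.single_apply]
  split_ifs with h <;> simp [h]

theorem lpOneSynthesis_mem_closure_span (a : lp (fun _ : ι => 𝕜) 1) :
    lpOneSynthesis hx a ∈ (Submodule.span 𝕜 (Set.range x)).topologicalClosure :=
  (Submodule.isClosed_topologicalClosure _).mem_of_tendsto (hasSum_lpOneSynthesis hx a)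
    (.of_forall fun _ => Submodule.sum_mem _ fun i _ =>
      Submodule.le_topologicalClosure _ (Submodule.smul_mem _ _ (Submodule.subset_span ⟨i, rfl⟩)))

variable [DecidableEq ι] {F : X →L[𝕜] lp (fun _ : ι => 𝕜) 1} (hFx : ∀ i, F (x i) = lp.single 1 i 1)
include hFx

theorem apply_lpOneSynthesis (a : lp (fun _ : ι => 𝕜) 1) : F (lpOneSynthesis hx a) = a := by
  refine ((hasSum_lpOneSynthesis hx a).mapL F).unique ?_
  simp only [map_smul, hFx, ← lp.single_smul, smul_eq_mul, mul_one]
  exact lp.hasSum_single ENNReal.one_ne_top a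

theorem lpOneSynthesis_apply_of_mem_closure_span {y : X}
    (hy : y ∈ (Submodule.span 𝕜 (Set.range x)).topologicalClosure) :
    lpOneSynthesis hx (F y) = y := by
  have hspan : Set.EqOn ((lpOneSynthesis hx).comp F) (ContinuousLinearMap.id 𝕜 X)
      (Submodule.span 𝕜 (Set.range x)) := by
    refine LinearMap.eqOn_span' (f := ((lpOneSynthesis hx).comp F : X →ₗ[𝕜] X)) (g := .id) ?_
    rintro _ ⟨i, rfl⟩
    simp [hFx, lpOneSynthesis_single]
  rw [← SetLike.mem_coe, Submodule.topologicalClosure_coe] at hy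
  exact hspan.closure (by fun_prop) (by fun_prop) hy

end Synthesis

theorem stmt14_general (X : Type*) [NormedAddCommGroup X] [NormedSpace ℝ X] [CompleteSpace X]
    (x : ℕ → X) (xs : ℕ → (X →L[ℝ] ℝ))
    (hbi : ∀ k n, xs k (x n) = if k = n then (1 : ℝ) else 0)
    (hsn₂ : BddAbove (Set.range fun n => ‖x n‖))
    (F : X →L[ℝ] lp (fun _ : ℕ => ℝ) 1)
    (hF : ∀ (v : X) (n : ℕ), (F v : ∀ _ : ℕ, ℝ) n = xs n v)
    (Y : Submodule ℝ X)
    (hY : Y = (Submodule.span ℝ (Set.range x)).topologicalClosure) :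
    ∃ e : X ≃L[ℝ] (lp (fun _ : ℕ => ℝ) 1 × (X ⧸ Y)),
      ∀ v : X, e v = (F v, Submodule.Quotient.mk v) := by
  have hFx : ∀ n, F (x n) = lp.single 1 n 1 := fun n => lp.ext <| funext fun k => by
    rw [hF, hbi, lp.single_apply, Pi.single_apply]
  subst hY
  exact ⟨Submodule.equivProdQuotientOfSection _ F (lpOneSynthesis hsn₂)
    (apply_lpOneSynthesis hsn₂ hFx) (lpOneSynthesis_mem_closure_span hsn₂)
    fun _ => lpOneSynthesis_apply_of_mem_closure_span hsn₂ hFx, fun _ => rfl⟩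

theorem stmt14 (X : Type*) [NormedAddCommGroup X] [NormedSpace ℝ X] [CompleteSpace X]
    (x : ℕ → X) (xs : ℕ → (X →L[ℝ] ℝ))
    (hbi : ∀ k n, xs k (x n) = if k = n then (1 : ℝ) else 0)
    (hsn₁ : 0 < ⨅ n, ‖x n‖) (hsn₂ : BddAbove (Set.range fun n => ‖x n‖))
    (F : X →L[ℝ] lp (fun _ : ℕ => ℝ) 1)
    (hF : ∀ (v : X) (n : ℕ), (F v : ∀ _ : ℕ, ℝ) n = xs n v)
    (Y : Submodule ℝ X)
    (hY : Y = (Submodule.span ℝ (Set.range x)).topologicalClosure) :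
    ∃ e : X ≃L[ℝ] (lp (fun _ : ℕ => ℝ) 1 × (X ⧸ Y)),
      ∀ v : X, e v = (F v, Submodule.Quotient.mk v) :=
  stmt14_general X x xs hbi hsn₂ F hF Y hY
end

section
/- Let X be a topological vector space over ℝ and let (V_i)_{i∈I} be a family of linear subspaces of X each having trivial continuous dual (every continuous linear functional on V_i is zero). Then the closed linear span of ⋃ V_i also has trivial continuous dual. Consequently X possesses a maximum closed subspace with trivial dual (its core). -/
namespace Submodule

variable {R X : Type*} [Semiring R] [TopologicalSpace R]
  [AddCommMonoid X] [Module R X] [TopologicalSpace X]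

def HasTrivialDual (V : Submodule R X) : Prop :=
  ∀ f : V →L[R] R, f = 0

theorem HasTrivialDual.apply_eq_zero {V W : Submodule R X} (hV : V.HasTrivialDual) (hVW : V ≤ W)
    (f : W →L[R] R) {x : X} (hx : x ∈ V) : f ⟨x, hVW hx⟩ = 0 :=
  congr($(hV (f.comp (V.subtypeL.codRestrict W fun y => hVW y.2))) ⟨x, hx⟩)

theorem hasTrivialDual_iSup {ι : Sort*} {V : ι → Submodule R X}
    (hV : ∀ i, (V i).HasTrivialDual) : (⨆ i, V i).HasTrivialDual := by
  refine fun f => ContinuousLinearMap.ext fun ⟨x, hx⟩ => ?_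
  change f ⟨x, hx⟩ = 0
  induction hx using iSup_induction' with
  | mem i x hx => exact (hV i).apply_eq_zero (le_iSup V i) f hx
  | zero => exact map_zero f
  | add x y hx hy ihx ihy =>
    exact (map_add f ⟨x, hx⟩ ⟨y, hy⟩).trans (by rw [ihx, ihy, add_zero])

variable [ContinuousConstSMul R X] [ContinuousAdd X]

theorem HasTrivialDual.topologicalClosure [T2Space R] {V : Submodule R X}
    (hV : V.HasTrivialDual) : V.topologicalClosure.HasTrivialDual := by
  intro f
  have hdense : Dense {y : V.topologicalClosure | (y : X) ∈ V} :=
    Subtype.dense_iff.2 <| closure_mono fun z hz =>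
      ⟨(⟨z, V.le_topologicalClosure hz⟩ : V.topologicalClosure), hz, rfl⟩
  refine DFunLike.coe_injective (Continuous.ext_on hdense f.continuous continuous_zero ?_)
  rintro ⟨x, -⟩ (hx : x ∈ V)
  exact hV.apply_eq_zero V.le_topologicalClosure f hx

variable (R X) in
def trivialDualCore : Submodule R X :=
  (⨆ W : {W : Submodule R X // W.HasTrivialDual}, (W : Submodule R X)).topologicalClosure

theorem isClosed_trivialDualCore : IsClosed (trivialDualCore R X : Set X) :=
  isClosed_topologicalClosure _

theorem hasTrivialDual_trivialDualCore [T2Space R] : (trivialDualCore R X).HasTrivialDual :=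
  (hasTrivialDual_iSup fun W => W.2).topologicalClosure

theorem le_trivialDualCore {W : Submodule R X} (hW : W.HasTrivialDual) : W ≤ trivialDualCore R X :=
  (le_iSup (fun W : {W : Submodule R X // W.HasTrivialDual} => (W : Submodule R X)) ⟨W, hW⟩).trans
    (le_topologicalClosure _)

end Submodule

theorem stmt17 (X : Type*) [AddCommGroup X] [Module ℝ X] [TopologicalSpace X]
    [IsTopologicalAddGroup X] [ContinuousSMul ℝ X]
    {I : Type*} (V : I → Submodule ℝ X)
    (htriv : ∀ i, ∀ f : (V i) →L[ℝ] ℝ, f = 0) :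
    (∀ g : ((⨆ i, V i).topologicalClosure) →L[ℝ] ℝ, g = 0) ∧
    ∃ C : Submodule ℝ X, IsClosed (C : Set X) ∧ (∀ g : C →L[ℝ] ℝ, g = 0) ∧
      ∀ W : Submodule ℝ X, (∀ g : W →L[ℝ] ℝ, g = 0) → W ≤ C :=
  ⟨(Submodule.hasTrivialDual_iSup htriv).topologicalClosure, Submodule.trivialDualCore ℝ X,
    Submodule.isClosed_trivialDualCore, Submodule.hasTrivialDual_trivialDualCore,
    fun _ => Submodule.le_trivialDualCore⟩
end
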